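/- Let f : ℝ × ℝⁿ → ℝ be a smooth positive function that is ℤⁿ-periodic in the space variable, i.e. f(t, x + k) = f(t, x) for all t ∈ ℝ, x ∈ ℝⁿ and k ∈ ℤⁿ. Then the free-falling trajectories for f are complete: for every s₀ ∈ ℝ, x₀ ∈ ℝⁿ and v₀ ∈ ℝⁿ there exists a free-falling trajectory σ : ℝ → ℝⁿ defined on all of ℝ with σ(s₀) = x₀ and σ'(s₀) = v₀. -/

import Mathlib

local notation "⟪" x ", " y "⟫_ℝ" => @inner ℝ _ _ x y
open Real Set Filter Topology

/-- `∂ₜ u (s,x)` where `u = log f`. -/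
noncomputable def ut {n : ℕ} (f : ℝ × EuclideanSpace ℝ (Fin n) → ℝ) (s : ℝ)
    (x : EuclideanSpace ℝ (Fin n)) : ℝ :=
  deriv (fun t : ℝ => Real.log (f (t, x))) s

/-- `∇ₓ u (s,x)`, the spatial gradient of `u = log f`. -/
noncomputable def gradu {n : ℕ} (f : ℝ × EuclideanSpace ℝ (Fin n) → ℝ) (s : ℝ)
    (x : EuclideanSpace ℝ (Fin n)) : EuclideanSpace ℝ (Fin n) :=
  gradient (fun y => Real.log (f (s, y))) x

/-- `σ` (with derivative `σ'`) is a free-falling trajectory for `f` on `J`: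
`σ'' + 2[∂ₜu + ⟨∇ₓu, σ'⟩]·σ' − ‖σ'‖²·∇ₓu = 0` on `J`, where `u = log f`. -/
def IsFreeFall {n : ℕ} (f : ℝ × EuclideanSpace ℝ (Fin n) → ℝ)
    (σ σ' : ℝ → EuclideanSpace ℝ (Fin n)) (J : Set ℝ) : Prop :=
  (∀ s ∈ J, HasDerivAt σ (σ' s) s) ∧
  ∀ s ∈ J, HasDerivAt σ'
    (-((2 * (ut f s (σ s) + ⟪gradu f s (σ s), σ' s⟫_ℝ)) • σ' s)
      + (‖σ' s‖ ^ 2) • gradu f s (σ s)) s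

set_option linter.unusedSectionVars false
set_option maxHeartbeats 1000000

/-! ### Generic ODE toolkit -/

section ODE

variable {P : Type*} [NormedAddCommGroup P] [NormedSpace ℝ P] [CompleteSpace P] [ProperSpace P]
variable {G : ℝ → P → P}


lemma ode_cont (hG : Continuous fun q : ℝ × P => G q.1 q.2) (a b r : ℝ) (x₀ : P) :
    ∃ C : ℝ, 0 ≤ C ∧ ∀ t ∈ Icc a b, ∀ x ∈ Metric.closedBall x₀ r, ‖G t x‖ ≤ C := by
  obtain ⟨C, hC⟩ := ((isCompact_Icc (a := a) (b := b)).prod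
    (isCompact_closedBall x₀ r)).exists_bound_of_continuousOn
    (hG.continuousOn (s := Icc a b ×ˢ Metric.closedBall x₀ r))
  exact ⟨max C 0, le_max_right _ _, fun t ht x hx =>
    le_trans (hC (t, x) ⟨ht, hx⟩) (le_max_left _ _)⟩

lemma ode_lip (hG : ContDiff ℝ 1 fun q : ℝ × P => G q.1 q.2) (a b r : ℝ) (x₀ : P) :
    ∃ K : NNReal, ∀ t ∈ Icc a b, LipschitzOnWith K (G t) (Metric.closedBall x₀ r) := by
  set Φ : ℝ × P → P := fun q => G q.1 q.2 with hΦ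
  set D : ℝ × P → P →L[ℝ] P := fun q =>
    (fderiv ℝ Φ q).comp (((0 : P →L[ℝ] ℝ)).prod (ContinuousLinearMap.id ℝ P)) with hD
  have hDc : Continuous D := (hG.continuous_fderiv one_ne_zero).clm_comp continuous_const
  obtain ⟨C, hC⟩ := ((isCompact_Icc (a := a) (b := b)).prod
    (isCompact_closedBall x₀ r)).exists_bound_of_continuousOn
    (hDc.continuousOn (s := Icc a b ×ˢ Metric.closedBall x₀ r))
  refine ⟨C.toNNReal, fun t ht => ?_⟩
  have hdiff : ∀ x ∈ Metric.closedBall x₀ r, HasFDerivAt (G t) (D (t, x)) x := by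
    intro x hx
    have h1 : HasFDerivAt (fun y : P => ((t, y) : ℝ × P))
        (((0 : P →L[ℝ] ℝ)).prod (ContinuousLinearMap.id ℝ P)) x :=
      (hasFDerivAt_const t x).prodMk (hasFDerivAt_id x)
    exact ((hG.differentiable one_ne_zero (t, x)).hasFDerivAt).comp x h1
  apply (convex_closedBall x₀ r).lipschitzOnWith_of_nnnorm_fderiv_le
    (fun x hx => (hdiff x hx).differentiableAt)
  intro x hx
  rw [(hdiff x hx).fderiv]
  have := hC (t, x) ⟨ht, hx⟩
  rw [← NNReal.coe_le_coe, coe_nnnorm, Real.coe_toNNReal']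
  exact le_max_of_le_left this

lemma mem_nhdsWithin_Ici_of_Icc {a b t : ℝ} (ht : t ∈ Ico a b) :
    Icc a b ∈ 𝓝[≥] t := by
  refine mem_nhdsWithin.2 ⟨Iio b, isOpen_Iio, ht.2, ?_⟩
  rintro x ⟨hx1, hx2⟩
  exact ⟨le_trans ht.1 hx2, le_of_lt hx1⟩

/-- local existence -/
lemma ode_local (hG : ContDiff ℝ 1 fun q : ℝ × P => G q.1 q.2) (t₀ : ℝ) (p : P) :
    ∃ ε > (0:ℝ), ∃ y : ℝ → P, y t₀ = p ∧ ∀ s ∈ Icc (t₀ - ε) (t₀ + ε),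
      HasDerivWithinAt y (G s (y s)) (Icc (t₀ - ε) (t₀ + ε)) s := by
  obtain ⟨C, hC0, hC⟩ := ode_cont hG.continuous (t₀ - 1) (t₀ + 1) 1 p
  obtain ⟨K, hK⟩ := ode_lip hG (t₀ - 1) (t₀ + 1) 1 p
  set ε : ℝ := min 1 (1 / (C + 1)) with hε
  have hεpos : 0 < ε := lt_min one_pos (by positivity)
  have hε1 : ε ≤ 1 := min_le_left _ _
  have hsub : Icc (t₀ - ε) (t₀ + ε) ⊆ Icc (t₀ - 1) (t₀ + 1) :=
    Icc_subset_Icc (by linarith) (by linarith)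
  have ht₀ : t₀ ∈ Icc (t₀ - ε) (t₀ + ε) := ⟨by linarith, by linarith⟩
  have hpl : IsPicardLindelof G (⟨t₀, ht₀⟩ : Icc (t₀ - ε) (t₀ + ε)) p 1 0 C.toNNReal K := by
    constructor
    · intro t ht
      rw [NNReal.coe_one]
      exact hK t (hsub ht)
    · exact fun x hx => (hG.continuous.comp (continuous_id.prodMk continuous_const)).continuousOn
    · intro t ht x hx
      rw [NNReal.coe_one] at hx
      rw [Real.coe_toNNReal _ hC0]
      exact hC t (hsub ht) x hx
    · show (C.toNNReal : ℝ) * max (t₀ + ε - t₀) (t₀ - (t₀ - ε)) ≤ ((1 : NNReal) : ℝ) - ((0 : NNReal) : ℝ)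
      have : max (t₀ + ε - t₀) (t₀ - (t₀ - ε)) = ε := by simp
      rw [Real.coe_toNNReal _ hC0, this, NNReal.coe_one, NNReal.coe_zero, sub_zero]
      calc C * ε ≤ C * (1 / (C + 1)) := by
            apply mul_le_mul_of_nonneg_left (min_le_right _ _) hC0
        _ ≤ 1 := by rw [mul_one_div]; rw [div_le_one (by linarith)]; linarith
  obtain ⟨y, hy0, hy⟩ := hpl.exists_eq_forall_mem_Icc_hasDerivWithinAt₀
  exact ⟨ε, hεpos, y, hy0, hy⟩

/-- uniqueness -/
lemma ode_unique (hG : ContDiff ℝ 1 fun q : ℝ × P => G q.1 q.2) {a b : ℝ} {y z : ℝ → P}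
    (hab : a ≤ b)
    (hy : ∀ s ∈ Icc a b, HasDerivWithinAt y (G s (y s)) (Icc a b) s)
    (hz : ∀ s ∈ Icc a b, HasDerivWithinAt z (G s (z s)) (Icc a b) s)
    (h0 : y a = z a) : EqOn y z (Icc a b) := by
  have hyc : ContinuousOn y (Icc a b) := fun s hs => (hy s hs).continuousWithinAt
  have hzc : ContinuousOn z (Icc a b) := fun s hs => (hz s hs).continuousWithinAt
  obtain ⟨ry, hry⟩ := (isCompact_Icc.image_of_continuousOn hyc).isBounded.subset_closedBall 0
  obtain ⟨rz, hrz⟩ := (isCompact_Icc.image_of_continuousOn hzc).isBounded.subset_closedBall 0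
  set r : ℝ := max ry rz with hr
  set G' : ℝ → P → P := fun t => G (max a (min t b)) with hG'
  obtain ⟨K, hK⟩ := ode_lip hG a b r 0
  have hK' : ∀ t, LipschitzOnWith K (G' t) (Metric.closedBall 0 r) := by
    intro t
    apply hK
    constructor
    · exact le_max_left _ _
    · exact max_le hab (min_le_right _ _)
  have key : EqOn y z (Icc a b) := by
    apply ODE_solution_unique_of_mem_Icc_right (v := G') (s := fun _ => Metric.closedBall 0 r)
      (fun t _ => hK' t) hyc ?_ ?_ hzc ?_ ?_ h0
    · intro t ht
      have h1 := (hy t ⟨ht.1, le_of_lt ht.2⟩).mono_of_mem_nhdsWithin (mem_nhdsWithin_Ici_of_Icc ht)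
      have : G' t (y t) = G t (y t) := by
        show G (max a (min t b)) (y t) = _
        rw [min_eq_left (le_of_lt ht.2), max_eq_right ht.1]
      rwa [this]
    · intro t ht
      exact Metric.closedBall_subset_closedBall (le_max_left _ _)
        (hry ⟨t, ⟨ht.1, le_of_lt ht.2⟩, rfl⟩)
    · intro t ht
      have h1 := (hz t ⟨ht.1, le_of_lt ht.2⟩).mono_of_mem_nhdsWithin (mem_nhdsWithin_Ici_of_Icc ht)
      have : G' t (z t) = G t (z t) := by
        show G (max a (min t b)) (z t) = _
        rw [min_eq_left (le_of_lt ht.2), max_eq_right ht.1]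
      rwa [this]
    · intro t ht
      exact Metric.closedBall_subset_closedBall (le_max_right _ _)
        (hrz ⟨t, ⟨ht.1, le_of_lt ht.2⟩, rfl⟩)
  exact key

lemma hasDerivWithinAt_singleton' (f : ℝ → P) (d : P) (x : ℝ) :
    HasDerivWithinAt f d {x} x := by
  rw [hasDerivWithinAt_iff_hasFDerivWithinAt]
  simp only [HasFDerivWithinAt, nhdsWithin_singleton, hasFDerivAtFilter_iff_isLittleO,
    Asymptotics.isLittleO_pure]
  simp

lemma hasDerivWithinAt_nmem (f : ℝ → P) (d : P) {s : Set ℝ} {x : ℝ} (h : x ∉ closure s) :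
    HasDerivWithinAt f d s x :=
  hasDerivWithinAt_iff_hasFDerivWithinAt.2 (HasFDerivWithinAt.of_notMem_closure h)

lemma ode_global_fwd (hG : ContDiff ℝ 1 fun q : ℝ × P => G q.1 q.2) (s₀ : ℝ) (p₀ : P)
    (hbd : ∀ b, s₀ ≤ b → ∃ M : ℝ, ∀ c ∈ Icc s₀ b, ∀ y : ℝ → P, y s₀ = p₀ →
      (∀ s ∈ Icc s₀ c, HasDerivWithinAt y (G s (y s)) (Icc s₀ c) s) →
      ∀ s ∈ Icc s₀ c, ‖y s‖ ≤ M) :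
    ∃ y : ℝ → P, y s₀ = p₀ ∧ ∀ s ∈ Ici s₀, HasDerivWithinAt y (G s (y s)) (Ici s₀) s := by
  classical
  set Sol : ℝ → (ℝ → P) → Prop := fun c y => y s₀ = p₀ ∧
    ∀ s ∈ Icc s₀ c, HasDerivWithinAt y (G s (y s)) (Icc s₀ c) s with hSol
  set A : Set ℝ := {b | s₀ ≤ b ∧ ∃ y, Sol b y} with hA
  have hs₀A : s₀ ∈ A := by
    refine ⟨le_rfl, fun _ => p₀, rfl, fun s hs => ?_⟩
    have hss : s = s₀ := le_antisymm hs.2 hs.1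
    subst hss
    rw [Icc_self]
    exact hasDerivWithinAt_singleton' _ _ _
  have hlow : ∀ b ∈ A, ∀ c, s₀ ≤ c → c ≤ b → c ∈ A := by
    rintro b ⟨hb, y, hy0, hy⟩ c hc1 hc2
    exact ⟨hc1, y, hy0, fun s hs => (hy s ⟨hs.1, hs.2.trans hc2⟩).mono (Icc_subset_Icc_right hc2)⟩
  -- extension step
  have hext : ∀ b ∈ A, ∃ ε > (0:ℝ), b + ε ∈ A := by
    rintro b ⟨hb, y, hy0, hy⟩
    obtain ⟨ε, hε, z, hz0, hz⟩ := ode_local hG b (y b)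
    refine ⟨ε, hε, le_trans hb (by linarith), fun s => if s ≤ b then y s else z s, ?_, ?_⟩
    · simp only [if_pos hb, hy0]
    · intro s hs
      set w : ℝ → P := fun s => if s ≤ b then y s else z s with hw
      have hIccsub : Icc b (b + ε) ⊆ Icc (b - ε) (b + ε) := Icc_subset_Icc (by linarith) le_rfl
      have hwy : EqOn w y (Icc s₀ b) := fun x hx => if_pos hx.2
      have hwz : EqOn w z (Icc b (b + ε)) := by
        intro x hx
        by_cases h : x ≤ b
        · have : x = b := le_antisymm h hx.1
          subst this
          simp only [hw, if_pos le_rfl, hz0]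
        · exact if_neg h
      have h₁ : HasDerivWithinAt w (G s (w s)) (Icc s₀ b) s := by
        by_cases h : s ≤ b
        · have hs' : s ∈ Icc s₀ b := ⟨hs.1, h⟩
          have := (hy s hs').congr hwy (hwy hs')
          rwa [← hwy hs'] at this
        · exact hasDerivWithinAt_nmem _ _ (by
            rw [isClosed_Icc.closure_eq]
            exact fun hc => h hc.2)
      have h₂ : HasDerivWithinAt w (G s (w s)) (Icc b (b + ε)) s := by
        by_cases h : b ≤ s
        · have hs' : s ∈ Icc b (b + ε) := ⟨h, hs.2⟩
          have hs'' : s ∈ Icc (b - ε) (b + ε) := hIccsub hs'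
          have := (((hz s hs'').mono hIccsub).congr hwz (hwz hs'))
          rwa [← hwz hs'] at this
        · exact hasDerivWithinAt_nmem _ _ (by
            rw [isClosed_Icc.closure_eq]
            exact fun hc => h hc.1)
      have := h₁.union h₂
      rwa [Icc_union_Icc_eq_Icc hb (by linarith)] at this
  -- limit step
  have hlim : ∀ τ, s₀ < τ → (∀ c ∈ Ico s₀ τ, c ∈ A) → τ ∈ A := by
    intro τ hτ hIco
    have hc : ∀ c : ℝ, ∃ y, c ∈ Ico s₀ τ → Sol c y := by
      intro c
      by_cases h : c ∈ Ico s₀ τ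
      · obtain ⟨_, y, hy⟩ := hIco c h
        exact ⟨y, fun _ => hy⟩
      · exact ⟨fun _ => p₀, fun h' => absurd h' h⟩
    choose Ysol hYsol using hc
    set Y : ℝ → P := fun s => Ysol ((max s s₀ + τ)/2) s with hY
    have hcoh : ∀ c ∈ Ico s₀ τ, EqOn Y (Ysol c) (Icc s₀ c) := by
      intro c hcIco s hs
      have hmax : max s s₀ = s := max_eq_left hs.1
      set m : ℝ := (max s s₀ + τ)/2 with hm
      have hm' : m = (s + τ)/2 := by rw [hm, hmax]
      have hsτ : s < τ := lt_of_le_of_lt hs.2 hcIco.2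
      have hmIco : m ∈ Ico s₀ τ := by
        constructor
        · rw [hm']; linarith [hs.1]
        · rw [hm']; linarith
      have hsm : s ≤ m := by rw [hm']; linarith
      have h1 := hYsol m hmIco
      have h2 := hYsol c hcIco
      set d : ℝ := min m c with hd
      have hsd : s ∈ Icc s₀ d := ⟨hs.1, le_min hsm hs.2⟩
      have hds₀ : s₀ ≤ d := le_trans hs.1 hsd.2
      have hu := ode_unique hG hds₀
        (fun x hx => (h1.2 x ⟨hx.1, hx.2.trans (min_le_left _ _)⟩).mono
          (Icc_subset_Icc_right (min_le_left _ _)))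
        (fun x hx => (h2.2 x ⟨hx.1, hx.2.trans (min_le_right _ _)⟩).mono
          (Icc_subset_Icc_right (min_le_right _ _)))
        (h1.1.trans h2.1.symm)
      exact hu hsd
    obtain ⟨M, hM⟩ := hbd τ (le_of_lt hτ)
    have hYM : ∀ s ∈ Ico s₀ τ, ‖Y s‖ ≤ M := by
      intro s hs
      have h1 := hYsol s hs
      have := hM s ⟨hs.1, le_of_lt hs.2⟩ (Ysol s) h1.1 h1.2 s ⟨hs.1, le_rfl⟩
      rwa [← hcoh s hs ⟨hs.1, le_rfl⟩] at this
    have hM0 : 0 ≤ M := le_trans (norm_nonneg _) (hYM s₀ ⟨le_rfl, hτ⟩)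
    obtain ⟨C, hC0, hC⟩ := ode_cont hG.continuous s₀ τ M 0
    -- Y is C-Lipschitz on [s₀, τ)
    have hlipY : ∀ s1 s2 : ℝ, s₀ ≤ s1 → s1 ≤ s2 → s2 < τ → ‖Y s2 - Y s1‖ ≤ C * (s2 - s1) := by
      intro s1 s2 h1 h2 h3
      have hs2 : s2 ∈ Ico s₀ τ := ⟨le_trans h1 h2, h3⟩
      have hsol := hYsol s2 hs2
      have hder : ∀ x ∈ Icc s1 s2, HasDerivWithinAt (Ysol s2) (G x (Ysol s2 x)) (Icc s1 s2) x :=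
        fun x hx => (hsol.2 x ⟨le_trans h1 hx.1, hx.2⟩).mono
          (Icc_subset_Icc h1 le_rfl)
      have hbound : ∀ x ∈ Ico s1 s2, ‖G x (Ysol s2 x)‖ ≤ C := by
        intro x hx
        have hxI : x ∈ Icc s₀ s2 := ⟨le_trans h1 hx.1, le_of_lt hx.2⟩
        have hxIco : x ∈ Ico s₀ τ := ⟨hxI.1, lt_of_lt_of_le hx.2 (le_of_lt h3)⟩
        apply hC x ⟨hxI.1, le_trans hxI.2 (le_of_lt h3)⟩
        rw [Metric.mem_closedBall, dist_zero_right, ← hcoh s2 hs2 hxI]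
        exact hYM x hxIco
      have := norm_image_sub_le_of_norm_deriv_le_segment' hder hbound s2 ⟨h2, le_rfl⟩
      calc ‖Y s2 - Y s1‖ = ‖Ysol s2 s2 - Ysol s2 s1‖ := by
            rw [hcoh s2 hs2 ⟨le_trans h1 h2, le_rfl⟩, hcoh s2 hs2 ⟨h1, h2⟩]
        _ ≤ C * (s2 - s1) := this
    -- Cauchy at τ
    have hFne : (𝓝[Ico s₀ τ] τ).NeBot := by
      apply mem_closure_iff_nhdsWithin_neBot.1
      rw [closure_Ico (ne_of_lt hτ)]
      exact ⟨le_of_lt hτ, le_rfl⟩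
    have hcauchy : Cauchy (map Y (𝓝[Ico s₀ τ] τ)) := by
      rw [Metric.cauchy_iff]
      refine ⟨map_neBot, fun ε hε => ?_⟩
      set δ : ℝ := ε / (2 * (C + 1)) with hδdef
      have hδ : 0 < δ := by positivity
      refine ⟨Y '' (Ico s₀ τ ∩ Ioi (τ - δ)), ?_, ?_⟩
      · exact image_mem_map (inter_mem_nhdsWithin _ (Ioi_mem_nhds (by linarith)))
      · have key : ∀ a ∈ Ico s₀ τ ∩ Ioi (τ - δ), ∀ b ∈ Ico s₀ τ ∩ Ioi (τ - δ),
            a ≤ b → dist (Y a) (Y b) < ε := by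
          rintro a ⟨ha1, ha2⟩ b ⟨hb1, hb2⟩ hab
          rw [dist_comm, dist_eq_norm]
          have h1 : ‖Y b - Y a‖ ≤ C * (b - a) := hlipY a b ha1.1 hab hb1.2
          have h2 : b - a < δ := by
            have := ha2
            simp only [mem_Ioi] at this
            linarith [hb1.2]
          calc ‖Y b - Y a‖ ≤ C * (b - a) := h1
            _ ≤ C * δ := by nlinarith
            _ < ε := by
                have hδε : δ * (2 * (C + 1)) = ε := by
                  rw [hδdef]; field_simp
                nlinarith [mul_nonneg hC0 hδ.le, hδ]
        rintro x ⟨a, ha, rfl⟩ y ⟨b, hb, rfl⟩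
        rcases le_total a b with h | h
        · exact key a ha b hb h
        · rw [dist_comm]; exact key b hb a ha h
    obtain ⟨L, hL⟩ := CompleteSpace.complete hcauchy
    have hYL : Tendsto Y (𝓝[Ico s₀ τ] τ) (𝓝 L) := hL
    -- the extended solution
    set yy : ℝ → P := fun s => if s < τ then Y s else L with hyy
    have hyyY : ∀ x, x < τ → yy x = Y x := fun x hx => if_pos hx
    have hyyτ : yy τ = L := if_neg (lt_irrefl τ)
    -- derivative of yy within Icc s₀ τ at interior points
    have hder : ∀ s, s₀ ≤ s → s < τ → HasDerivWithinAt yy (G s (yy s)) (Icc s₀ τ) s := by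
      intro s hs1 hs2
      set c : ℝ := (s + τ)/2 with hc
      have hcIco : c ∈ Ico s₀ τ := ⟨by rw [hc]; linarith, by rw [hc]; linarith⟩
      have hsc : s < c := by rw [hc]; linarith
      have hsIcc : s ∈ Icc s₀ c := ⟨hs1, le_of_lt hsc⟩
      have h1 : HasDerivWithinAt (Ysol c) (G s (Ysol c s)) (Icc s₀ c) s :=
        (hYsol c hcIco).2 s hsIcc
      have h2 : HasDerivWithinAt Y (G s (Y s)) (Icc s₀ c) s := by
        have := h1.congr (fun x hx => hcoh c hcIco hx) (hcoh c hcIco hsIcc)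
        rwa [← hcoh c hcIco hsIcc] at this
      have h3 : HasDerivWithinAt Y (G s (Y s)) (Icc s₀ τ) s := by
        apply h2.mono_of_mem_nhdsWithin
        apply mem_of_superset (inter_mem_nhdsWithin _ (Iio_mem_nhds hsc))
        exact fun x hx => ⟨hx.1.1, hx.2.le⟩
      have h4 : HasDerivWithinAt yy (G s (Y s)) (Icc s₀ τ) s := by
        apply h3.congr_of_eventuallyEq ?_ (hyyY s hs2)
        filter_upwards [mem_nhdsWithin_of_mem_nhds (Iio_mem_nhds hs2)] with x hx
        exact hyyY x hx
      rwa [← hyyY s hs2] at h4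
    refine ⟨le_of_lt hτ, yy, ?_, ?_⟩
    · rw [hyyY s₀ hτ, hcoh s₀ ⟨le_rfl, hτ⟩ ⟨le_rfl, le_rfl⟩, (hYsol s₀ ⟨le_rfl, hτ⟩).1]
    · intro s hs
      rcases lt_or_eq_of_le hs.2 with h | h
      · exact hder s hs.1 h
      · subst h
        have hTY : Tendsto yy (𝓝[Ioo s₀ s] s) (𝓝 L) := by
          apply (hYL.mono_left (nhdsWithin_mono _ Ioo_subset_Ico_self)).congr'
          filter_upwards [eventually_mem_nhdsWithin] with x hx
          exact (hyyY x hx.2).symm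
        have f_diff : DifferentiableOn ℝ yy (Ioo s₀ s) := fun x hx =>
          ((hder x hx.1.le hx.2).differentiableWithinAt).mono Ioo_subset_Icc_self
        have f_lim : ContinuousWithinAt yy (Ioo s₀ s) s := by
          rw [ContinuousWithinAt, hyyτ]
          exact hTY
        have hs' : Ioo s₀ s ∈ 𝓝[<] s := Ioo_mem_nhdsLT_of_mem ⟨hτ, le_rfl⟩
        have f_lim' : Tendsto (fun x => deriv yy x) (𝓝[<] s) (𝓝 (G s L)) := by
          have h5 : Tendsto (fun x : ℝ => ((x, yy x) : ℝ × P)) (𝓝[<] s) (𝓝 (s, L)) := by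
            apply Tendsto.prodMk_nhds (tendsto_id.mono_left nhdsWithin_le_nhds)
            rw [← nhdsWithin_Ioo_eq_nhdsLT hτ]
            exact hTY
          have h6 : Tendsto (fun x : ℝ => G x (yy x)) (𝓝[<] s) (𝓝 (G s L)) :=
            (hG.continuous.tendsto (s, L)).comp h5
          apply h6.congr'
          filter_upwards [hs'] with x hx
          exact (((hder x hx.1.le hx.2).hasDerivAt
            (Icc_mem_nhds hx.1 hx.2)).deriv).symm
        have hfin := hasDerivWithinAt_Iic_of_tendsto_deriv f_diff f_lim hs' f_lim'
        rw [hyyτ]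
        exact hfin.mono Icc_subset_Iic_self
  -- A = Ici s₀
  have hAll : ∀ b, s₀ ≤ b → b ∈ A := by
    by_contra hcon
    push_neg at hcon
    obtain ⟨b₀, hb₀1, hb₀2⟩ := hcon
    have hbdd : BddAbove A := by
      refine ⟨b₀, fun x hx => ?_⟩
      by_contra hxb
      push_neg at hxb
      exact hb₀2 (hlow x hx b₀ hb₀1 hxb.le)
    set τ : ℝ := sSup A with hτdef
    have hτs₀ : s₀ ≤ τ := le_csSup hbdd hs₀A
    by_cases hmem : τ ∈ A
    · obtain ⟨ε, hε, hτε⟩ := hext τ hmem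
      have := le_csSup hbdd hτε
      linarith
    · refine hmem (hlim τ (lt_of_le_of_ne hτs₀ (fun h => hmem (h ▸ hs₀A))) ?_)
      intro c hc
      obtain ⟨a, haA, hca⟩ := exists_lt_of_lt_csSup ⟨s₀, hs₀A⟩ hc.2
      exact hlow a haA c hc.1 (le_of_lt hca)
  -- assemble the global solution
  have hA1 : ∀ b : ℝ, ∃ y, s₀ ≤ b → Sol (b + 1) y := by
    intro b
    by_cases h : s₀ ≤ b
    · obtain ⟨_, y, hy⟩ := hAll (b + 1) (by linarith)
      exact ⟨y, fun _ => hy⟩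
    · exact ⟨fun _ => p₀, fun h' => absurd h' h⟩
  choose Yg hYg using hA1
  refine ⟨fun s => Yg s s, (hYg s₀ le_rfl).1, ?_⟩
  intro s hs
  have hs : s₀ ≤ s := hs
  have hcoh2 : ∀ x ∈ Icc s₀ (s + 1), Yg x x = Yg s x := by
    intro x hx
    have hx0 : s₀ ≤ x := hx.1
    set d : ℝ := min (x + 1) (s + 1) with hd
    have hxd : x ∈ Icc s₀ d := ⟨hx0, le_min (by linarith) hx.2⟩
    exact (ode_unique hG (le_trans hx0 hxd.2)
      (fun r hr => ((hYg x hx0).2 r ⟨hr.1, hr.2.trans (min_le_left _ _)⟩).mono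
        (Icc_subset_Icc_right (min_le_left _ _)))
      (fun r hr => ((hYg s hs).2 r ⟨hr.1, hr.2.trans (min_le_right _ _)⟩).mono
        (Icc_subset_Icc_right (min_le_right _ _)))
      ((hYg x hx0).1.trans (hYg s hs).1.symm)) hxd
  have h1 : HasDerivWithinAt (Yg s) (G s (Yg s s)) (Icc s₀ (s + 1)) s :=
    (hYg s hs).2 s ⟨hs, by linarith⟩
  have h2 : HasDerivWithinAt (fun x => Yg x x) (G s (Yg s s)) (Icc s₀ (s + 1)) s :=
    h1.congr (fun x hx => hcoh2 x hx) (hcoh2 s ⟨hs, by linarith⟩)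
  apply h2.mono_of_mem_nhdsWithin
  apply mem_of_superset (inter_mem_nhdsWithin _ (Iio_mem_nhds (by linarith : s < s + 1)))
  exact fun x hx => ⟨hx.1, hx.2.le⟩

end ODE

/-! ### Derivative identities for `ut` and `gradu` -/

variable {n : ℕ} {f : ℝ × EuclideanSpace ℝ (Fin n) → ℝ}


section basic
variable (hf : ContDiff ℝ (⊤ : ℕ∞) f) (hfpos : ∀ p, 0 < f p)

include hf hfpos

lemma hU : ContDiff ℝ (⊤ : ℕ∞) (fun p : ℝ × EuclideanSpace ℝ (Fin n) => Real.log (f p)) :=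
  ContDiff.log hf (fun p => (hfpos p).ne')

lemma ut_eq (s : ℝ) (x : EuclideanSpace ℝ (Fin n)) :
    ut f s x = fderiv ℝ (fun p : ℝ × EuclideanSpace ℝ (Fin n) => Real.log (f p)) (s, x) (1, 0) := by
  have h1 : HasDerivAt (fun t : ℝ => ((t, x) : ℝ × EuclideanSpace ℝ (Fin n))) (1, 0) s :=
    (hasDerivAt_id s).prodMk (hasDerivAt_const s x)
  have h2 := (((hU hf hfpos).differentiable (by simp) (s, x)).hasFDerivAt).comp_hasDerivAt s h1
  exact h2.deriv

lemma inner_gradu (s : ℝ) (x w : EuclideanSpace ℝ (Fin n)) :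
    ⟪gradu f s x, w⟫_ℝ = fderiv ℝ (fun p : ℝ × EuclideanSpace ℝ (Fin n) => Real.log (f p)) (s, x) (0, w) := by
  have h1 : HasFDerivAt (fun y : EuclideanSpace ℝ (Fin n) => ((s, y) : ℝ × EuclideanSpace ℝ (Fin n)))
      (((0 : EuclideanSpace ℝ (Fin n) →L[ℝ] ℝ)).prod (ContinuousLinearMap.id ℝ _)) x :=
    (hasFDerivAt_const s x).prodMk (hasFDerivAt_id x)
  have h2 := (((hU hf hfpos).differentiable (by simp) (s, x)).hasFDerivAt).comp x h1
  have h3 : fderiv ℝ (fun y => Real.log (f (s, y))) x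
      = (fderiv ℝ (fun p : ℝ × EuclideanSpace ℝ (Fin n) => Real.log (f p)) (s, x)).comp
        (((0 : EuclideanSpace ℝ (Fin n) →L[ℝ] ℝ)).prod (ContinuousLinearMap.id ℝ _)) := h2.fderiv
  rw [gradu, gradient, InnerProductSpace.toDual_symm_apply, h3]
  simp

lemma fderiv_decomp (s : ℝ) (x : EuclideanSpace ℝ (Fin n)) (a : ℝ) (w : EuclideanSpace ℝ (Fin n)) :
    fderiv ℝ (fun p : ℝ × EuclideanSpace ℝ (Fin n) => Real.log (f p)) (s, x) (a, w)
      = a * ut f s x + ⟪gradu f s x, w⟫_ℝ := by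
  have : ((a, w) : ℝ × EuclideanSpace ℝ (Fin n)) = a • ((1 : ℝ), (0 : EuclideanSpace ℝ (Fin n))) + ((0 : ℝ), w) := by
    simp [Prod.ext_iff]
  rw [this, map_add, map_smul, ← ut_eq hf hfpos, ← inner_gradu hf hfpos]
  simp [mul_comm]

end basic

section smooth
variable (hf : ContDiff ℝ (⊤ : ℕ∞) f) (hfpos : ∀ p, 0 < f p)
include hf hfpos

lemma ut_contDiff : ContDiff ℝ 1 (fun q : ℝ × EuclideanSpace ℝ (Fin n) => ut f q.1 q.2) := by
  have h : (fun q : ℝ × EuclideanSpace ℝ (Fin n) => ut f q.1 q.2)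
      = fun q => fderiv ℝ (fun p : ℝ × EuclideanSpace ℝ (Fin n) => Real.log (f p)) q (1, 0) := by
    funext q; exact ut_eq hf hfpos q.1 q.2
  rw [h]
  exact (((hU hf hfpos).fderiv_right (WithTop.coe_le_coe.2 le_top)).clm_apply contDiff_const)

lemma gradu_contDiff : ContDiff ℝ 1 (fun q : ℝ × EuclideanSpace ℝ (Fin n) => gradu f q.1 q.2) := by
  have h : (fun q : ℝ × EuclideanSpace ℝ (Fin n) => gradu f q.1 q.2)
      = fun q => (InnerProductSpace.toDual ℝ (EuclideanSpace ℝ (Fin n))).symm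
          ((fderiv ℝ (fun p : ℝ × EuclideanSpace ℝ (Fin n) => Real.log (f p)) q).comp
            (((0 : EuclideanSpace ℝ (Fin n) →L[ℝ] ℝ)).prod (ContinuousLinearMap.id ℝ _))) := by
    funext q
    have h1 : HasFDerivAt (fun y : EuclideanSpace ℝ (Fin n) => ((q.1, y) : ℝ × EuclideanSpace ℝ (Fin n)))
        (((0 : EuclideanSpace ℝ (Fin n) →L[ℝ] ℝ)).prod (ContinuousLinearMap.id ℝ _)) q.2 :=
      (hasFDerivAt_const q.1 q.2).prodMk (hasFDerivAt_id q.2)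
    have h2 := (((hU hf hfpos).differentiable (by simp) q).hasFDerivAt).comp q.2 h1
    rw [gradu, gradient]
    congr 1
    exact h2.fderiv
  rw [h]
  exact (InnerProductSpace.toDual ℝ (EuclideanSpace ℝ (Fin n))).symm.contDiff.comp
    (((hU hf hfpos).fderiv_right (WithTop.coe_le_coe.2 le_top)).clm_comp contDiff_const)

end smooth

/-- The first-order vector field of the free-fall equation. -/
noncomputable def ffField {n : ℕ} (f : ℝ × EuclideanSpace ℝ (Fin n) → ℝ) (s : ℝ)
    (p : EuclideanSpace ℝ (Fin n) × EuclideanSpace ℝ (Fin n)) :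
    EuclideanSpace ℝ (Fin n) × EuclideanSpace ℝ (Fin n) :=
  (p.2, -((2 * (ut f s p.1 + ⟪gradu f s p.1, p.2⟫_ℝ)) • p.2)
      + (‖p.2‖ ^ 2) • gradu f s p.1)

lemma ffField_contDiff (hf : ContDiff ℝ (⊤ : ℕ∞) f) (hfpos : ∀ p, 0 < f p) :
    ContDiff ℝ 1 (fun q : ℝ × (EuclideanSpace ℝ (Fin n) × EuclideanSpace ℝ (Fin n)) =>
      ffField f q.1 q.2) := by
  set m : ℝ × (EuclideanSpace ℝ (Fin n) × EuclideanSpace ℝ (Fin n)) →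
      ℝ × EuclideanSpace ℝ (Fin n) := fun q => (q.1, q.2.1) with hm
  have hmcd : ContDiff ℝ 1 m := contDiff_fst.prodMk (contDiff_fst.comp contDiff_snd)
  have hv : ContDiff ℝ 1 (fun q : ℝ × (EuclideanSpace ℝ (Fin n) × EuclideanSpace ℝ (Fin n)) =>
      q.2.2) := contDiff_snd.comp contDiff_snd
  have hA : ContDiff ℝ 1 (fun q : ℝ × (EuclideanSpace ℝ (Fin n) × EuclideanSpace ℝ (Fin n)) =>
      ut f q.1 q.2.1) := (ut_contDiff hf hfpos).comp hmcd
  have hg : ContDiff ℝ 1 (fun q : ℝ × (EuclideanSpace ℝ (Fin n) × EuclideanSpace ℝ (Fin n)) =>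
      gradu f q.1 q.2.1) := (gradu_contDiff hf hfpos).comp hmcd
  have hin : ContDiff ℝ 1 (fun q : ℝ × (EuclideanSpace ℝ (Fin n) × EuclideanSpace ℝ (Fin n)) =>
      ⟪gradu f q.1 q.2.1, q.2.2⟫_ℝ) := hg.inner ℝ hv
  have hnorm : ContDiff ℝ 1 (fun q : ℝ × (EuclideanSpace ℝ (Fin n) × EuclideanSpace ℝ (Fin n)) =>
      ‖q.2.2‖ ^ 2) := by
    have : (fun q : ℝ × (EuclideanSpace ℝ (Fin n) × EuclideanSpace ℝ (Fin n)) => ‖q.2.2‖ ^ 2)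
        = fun q => ⟪q.2.2, q.2.2⟫_ℝ := by
      funext q
      rw [real_inner_self_eq_norm_sq]
    rw [this]
    exact hv.inner ℝ hv
  apply ContDiff.prodMk hv
  apply ContDiff.add
  · apply ContDiff.neg
    apply ContDiff.smul (f := fun q : ℝ × (EuclideanSpace ℝ (Fin n) × EuclideanSpace ℝ (Fin n)) =>
      2 * (ut f q.1 q.2.1 + ⟪gradu f q.1 q.2.1, q.2.2⟫_ℝ)) _ hv
    exact (contDiff_const.mul (hA.add hin))
  · exact hnorm.smul hg

lemma exists_strip_bound (hf : ContDiff ℝ (⊤ : ℕ∞) f) (hfpos : ∀ p, 0 < f p)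
    (hper : ∀ (t : ℝ) (x k : EuclideanSpace ℝ (Fin n)),
      (∀ i, ∃ m : ℤ, k i = (m : ℝ)) → f (t, x + k) = f (t, x)) (a b : ℝ) :
    ∃ C : ℝ, 0 ≤ C ∧ ∀ s ∈ Icc a b, ∀ x : EuclideanSpace ℝ (Fin n),
      |Real.log (f (s, x))| ≤ C ∧ |ut f s x| ≤ C := by
  have hcont : Continuous (fun q : ℝ × EuclideanSpace ℝ (Fin n) =>
      ((Real.log (f q), ut f q.1 q.2) : ℝ × ℝ)) := by
    apply Continuous.prodMk
    · exact (hf.continuous.log (fun p => (hfpos p).ne')).comp continuous_id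
    · exact (ut_contDiff hf hfpos).continuous
  obtain ⟨C, hC⟩ := ((isCompact_Icc (a := a) (b := b)).prod
    (isCompact_closedBall (0 : EuclideanSpace ℝ (Fin n)) n)).exists_bound_of_continuousOn
    hcont.continuousOn
  refine ⟨max C 0, le_max_right _ _, fun s hs x => ?_⟩
  set k : EuclideanSpace ℝ (Fin n) := WithLp.toLp 2 (fun i => ((-⌊x i⌋ : ℤ) : ℝ)) with hk
  have hkint : ∀ i, ∃ m : ℤ, k i = (m : ℝ) := fun i => ⟨-⌊x i⌋, rfl⟩
  set x' : EuclideanSpace ℝ (Fin n) := x + k with hx'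
  have hx'i : ∀ i, x' i = Int.fract (x i) := by
    intro i
    show x i + k i = _
    simp only [hk, PiLp.toLp_apply, Int.cast_neg]
    rw [Int.fract]
    ring
  have hx'ball : x' ∈ Metric.closedBall (0 : EuclideanSpace ℝ (Fin n)) n := by
    rw [Metric.mem_closedBall, dist_zero_right]
    have h1 : ‖x'‖ = Real.sqrt (∑ i, ‖x' i‖ ^ 2) := by
      rw [EuclideanSpace.norm_eq]
    rw [h1]
    have h2 : (∑ i, ‖x' i‖ ^ 2) ≤ (n : ℝ) := by
      calc (∑ i, ‖x' i‖ ^ 2) ≤ ∑ _i : Fin n, (1 : ℝ) := by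
            apply Finset.sum_le_sum
            intro i _
            rw [hx'i i]
            have h3 := Int.fract_nonneg (x i)
            have h4 := Int.fract_lt_one (x i)
            rw [Real.norm_eq_abs, abs_of_nonneg h3]
            nlinarith
        _ = n := by simp
    calc Real.sqrt (∑ i, ‖x' i‖ ^ 2) ≤ Real.sqrt ((n:ℝ)^2) := by
          apply Real.sqrt_le_sqrt
          have hnn : (n : ℝ) ≤ (n : ℝ)^2 := by
            rcases Nat.eq_zero_or_pos n with h | h
            · simp [h]
            · have : (1:ℝ) ≤ n := by exact_mod_cast h
              nlinarith
          linarith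
      _ = n := Real.sqrt_sq (Nat.cast_nonneg n)
  have hfx : f (s, x) = f (s, x') := (hper s x k hkint).symm
  have hut : ut f s x = ut f s x' := by
    unfold ut
    congr 1
    funext t
    rw [hper t x k hkint]
  have := hC (s, x') ⟨hs, hx'ball⟩
  rw [Prod.norm_def] at this
  simp only [Real.norm_eq_abs] at this
  constructor
  · rw [hfx]
    exact le_trans (le_trans (le_max_left _ _) this) (le_max_left _ _)
  · rw [hut]
    exact le_trans (le_trans (le_max_right _ _) this) (le_max_left _ _)

lemma apriori_bound (hf : ContDiff ℝ (⊤ : ℕ∞) f) (hfpos : ∀ p, 0 < f p)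
    (hper : ∀ (t : ℝ) (x k : EuclideanSpace ℝ (Fin n)),
      (∀ i, ∃ m : ℤ, k i = (m : ℝ)) → f (t, x + k) = f (t, x))
    (s₀ b : ℝ) (hs₀b : s₀ ≤ b)
    (x₀ v₀ : EuclideanSpace ℝ (Fin n)) :
    ∃ M : ℝ, ∀ c ∈ Icc s₀ b, ∀ y : ℝ → EuclideanSpace ℝ (Fin n) × EuclideanSpace ℝ (Fin n),
      y s₀ = (x₀, v₀) →
      (∀ s ∈ Icc s₀ c, HasDerivWithinAt y (ffField f s (y s)) (Icc s₀ c) s) →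
      ∀ s ∈ Icc s₀ c, ‖y s‖ ≤ M := by
  obtain ⟨C, hC0, hC⟩ := exists_strip_bound hf hfpos hper s₀ b
  set M1 : ℝ := Real.exp (2 * C + C * (b - s₀)) * ‖v₀‖ with hM1
  have hM10 : 0 ≤ M1 := mul_nonneg (Real.exp_nonneg _) (norm_nonneg _)
  set M : ℝ := max (‖x₀‖ + M1 * (b - s₀)) M1 with hM
  refine ⟨M, fun c hc y hy0 hy s hsI => ?_⟩
  set σ : ℝ → EuclideanSpace ℝ (Fin n) := fun s => (y s).1 with hσ
  set w : ℝ → EuclideanSpace ℝ (Fin n) := fun s => (y s).2 with hw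
  set S : Set ℝ := Icc s₀ c with hS
  have hσ0 : σ s₀ = x₀ := by rw [hσ]; simp [hy0]
  have hw0 : w s₀ = v₀ := by rw [hw]; simp [hy0]
  have hσd : ∀ r ∈ S, HasDerivWithinAt σ (w r) S r := by
    intro r hr
    have := (ContinuousLinearMap.fst ℝ (EuclideanSpace ℝ (Fin n))
      (EuclideanSpace ℝ (Fin n))).hasFDerivAt.comp_hasDerivWithinAt r (hy r hr)
    exact this
  set ffw : ℝ → EuclideanSpace ℝ (Fin n) := fun r =>
    -((2 * (ut f r (σ r) + ⟪gradu f r (σ r), w r⟫_ℝ)) • w r)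
      + (‖w r‖ ^ 2) • gradu f r (σ r) with hffw
  have hwd : ∀ r ∈ S, HasDerivWithinAt w (ffw r) S r := by
    intro r hr
    have := (ContinuousLinearMap.snd ℝ (EuclideanSpace ℝ (Fin n))
      (EuclideanSpace ℝ (Fin n))).hasFDerivAt.comp_hasDerivWithinAt r (hy r hr)
    exact this
  -- derivative of φ(s) = log f (s, σ s)
  set φ : ℝ → ℝ := fun r => Real.log (f (r, σ r)) with hφdef
  have hφd : ∀ r ∈ S, HasDerivWithinAt φ
      (ut f r (σ r) + ⟪gradu f r (σ r), w r⟫_ℝ) S r := by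
    intro r hr
    have hcurve : HasDerivWithinAt (fun r : ℝ => ((r, σ r) : ℝ × EuclideanSpace ℝ (Fin n)))
        ((1 : ℝ), w r) S r := (hasDerivAt_id r).hasDerivWithinAt.prodMk (hσd r hr)
    have := (((hU hf hfpos).differentiable (by simp) (r, σ r)).hasFDerivAt).comp_hasDerivWithinAt r hcurve
    rw [fderiv_decomp hf hfpos r (σ r) 1 (w r), one_mul] at this
    exact this
  -- the energy function
  set h : ℝ → ℝ := fun r => Real.exp (2 * φ r) * ⟪w r, w r⟫_ℝ with hhdef
  have hhd : ∀ r ∈ S, HasDerivWithinAt h (-2 * ut f r (σ r) * h r) S r := by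
    intro r hr
    have he : HasDerivWithinAt (fun r => Real.exp (2 * φ r))
        ((2 * (ut f r (σ r) + ⟪gradu f r (σ r), w r⟫_ℝ)) * Real.exp (2 * φ r)) S r := by
      have := ((hφd r hr).const_mul 2).exp
      convert this using 1
      ring
    have hi : HasDerivWithinAt (fun r => ⟪w r, w r⟫_ℝ)
        (⟪w r, ffw r⟫_ℝ + ⟪ffw r, w r⟫_ℝ) S r := (hwd r hr).inner ℝ (hwd r hr)
    have hmul := he.mul hi
    refine hmul.congr_deriv ?_
    have hinner : ⟪ffw r, w r⟫_ℝ = -(2 * (ut f r (σ r) + ⟪gradu f r (σ r), w r⟫_ℝ))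
        * ⟪w r, w r⟫_ℝ + (‖w r‖ ^ 2) * ⟪gradu f r (σ r), w r⟫_ℝ := by
      rw [hffw]
      simp only [inner_add_left, inner_smul_left, inner_neg_left, RCLike.inner_apply,
        conj_trivial]
      ring
    have hinner2 : ⟪w r, ffw r⟫_ℝ = ⟪ffw r, w r⟫_ℝ := real_inner_comm _ _
    have hnw : ⟪w r, w r⟫_ℝ = ‖w r‖ ^ 2 := real_inner_self_eq_norm_sq _
    rw [hhdef]
    simp only []
    rw [hinner2, hinner, hnw]
    ring
  -- Gronwall
  have hccb : c ≤ b := hc.2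
  have hhcont : ContinuousOn h S := fun r hr => (hhd r hr).continuousWithinAt
  set δ : ℝ := Real.exp (2 * C) * ‖v₀‖ ^ 2 with hδ
  have hh0 : ‖h s₀‖ ≤ δ := by
    have hs₀S : s₀ ∈ Icc s₀ b := ⟨le_rfl, hs₀b⟩
    have hφ0 : |φ s₀| ≤ C := by
      rw [hφdef]
      simpa [hσ0] using (hC s₀ hs₀S x₀).1
    rw [hhdef]
    simp only [norm_mul, Real.norm_eq_abs]
    rw [abs_of_pos (Real.exp_pos _), hw0, real_inner_self_eq_norm_sq,
      abs_of_nonneg (by positivity)]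
    rw [hδ]
    apply mul_le_mul_of_nonneg_right _ (by positivity)
    apply Real.exp_le_exp.2
    have := abs_le.1 hφ0
    linarith [this.2]
  have hgron := norm_le_gronwallBound_of_norm_deriv_right_le (f := h)
    (f' := fun r => -2 * ut f r (σ r) * h r) (δ := δ) (K := 2 * C) (ε := 0)
    (a := s₀) (b := c) hhcont ?_ hh0 ?_
  rotate_left
  · intro r hr
    exact (hhd r ⟨hr.1, hr.2.le⟩).mono_of_mem_nhdsWithin (mem_nhdsWithin_Ici_of_Icc hr)
  · intro r hr
    have hrb : r ∈ Icc s₀ b := ⟨hr.1, le_trans hr.2.le hccb⟩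
    have hut : |ut f r (σ r)| ≤ C := (hC r hrb (σ r)).2
    rw [add_zero]
    have h1 : ‖(-2 : ℝ) * ut f r (σ r) * h r‖ = 2 * |ut f r (σ r)| * ‖h r‖ := by
      simp only [norm_mul, Real.norm_eq_abs, abs_neg, abs_two]
    rw [h1]
    apply mul_le_mul_of_nonneg_right _ (norm_nonneg _)
    linarith
  -- bound on the speed
  have hwle : ∀ t ∈ S, ‖w t‖ ≤ M1 := by
    intro t ht
    have htb : t ∈ Icc s₀ b := ⟨ht.1, le_trans ht.2 hccb⟩
    have hφt : |φ t| ≤ C := by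
      rw [hφdef]
      exact (hC t htb (σ t)).1
    have h2 := hgron t ht
    rw [gronwallBound_ε0] at h2
    have h3 : ‖h t‖ ≤ δ * Real.exp (2 * C * (b - s₀)) := by
      apply le_trans h2
      apply mul_le_mul_of_nonneg_left _ (by positivity)
      apply Real.exp_le_exp.2
      have := ht.2
      nlinarith
    have h4 : ⟪w t, w t⟫_ℝ ≤ δ * Real.exp (2 * C * (b - s₀)) * Real.exp (2 * C) := by
      have h5 : ⟪w t, w t⟫_ℝ = h t * Real.exp (-(2 * φ t)) := by
        rw [hhdef]
        simp only []
        rw [mul_comm (Real.exp (2 * φ t)), mul_assoc, ← Real.exp_add]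
        simp
      rw [h5]
      have h6 : Real.exp (-(2 * φ t)) ≤ Real.exp (2 * C) := by
        apply Real.exp_le_exp.2
        have := abs_le.1 hφt
        linarith [this.1]
      calc h t * Real.exp (-(2 * φ t)) ≤ ‖h t‖ * Real.exp (2 * C) := by
            apply mul_le_mul (le_abs_self _) h6 (Real.exp_nonneg _) (abs_nonneg _)
        _ ≤ δ * Real.exp (2 * C * (b - s₀)) * Real.exp (2 * C) :=
            mul_le_mul_of_nonneg_right h3 (Real.exp_nonneg _)
    have hM1sq : M1 ^ 2 = δ * Real.exp (2 * C * (b - s₀)) * Real.exp (2 * C) := by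
      have e1 : Real.exp (2*C + C*(b-s₀)) ^ 2
          = Real.exp (2*C) * Real.exp (2*C*(b-s₀)) * Real.exp (2*C) := by
        rw [sq, ← Real.exp_add, ← Real.exp_add, ← Real.exp_add]
        congr 1
        ring
      rw [hM1, hδ, mul_pow, e1]
      ring
    have h7 : ‖w t‖ ^ 2 ≤ M1 ^ 2 := by
      rw [← real_inner_self_eq_norm_sq, hM1sq]
      exact h4
    have h8 := Real.sqrt_le_sqrt h7
    rwa [Real.sqrt_sq (norm_nonneg _), Real.sqrt_sq hM10] at h8
  -- bound on the position
  have hσlip := norm_image_sub_le_of_norm_deriv_le_segment' (f := σ) (f' := w)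
    (C := M1) (a := s₀) (b := c) (fun x hx => hσd x hx)
    (fun x hx => hwle x ⟨hx.1, hx.2.le⟩)
  -- conclusion
  have hy1 : ‖(y s).1‖ ≤ ‖x₀‖ + M1 * (b - s₀) := by
    have := hσlip s hsI
    rw [hσ0] at this
    have h9 : ‖σ s‖ ≤ ‖x₀‖ + M1 * (s - s₀) := by
      calc ‖σ s‖ = ‖x₀ + (σ s - x₀)‖ := by congr 1; abel
        _ ≤ ‖x₀‖ + ‖σ s - x₀‖ := norm_add_le _ _
        _ ≤ ‖x₀‖ + M1 * (s - s₀) := by linarith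
    apply le_trans h9
    have : M1 * (s - s₀) ≤ M1 * (b - s₀) := by
      apply mul_le_mul_of_nonneg_left _ hM10
      linarith [le_trans hsI.2 hccb]
    linarith
  rw [Prod.norm_def]
  apply max_le
  · exact le_trans hy1 (le_max_left _ _)
  · exact le_trans (hwle s hsI) (le_max_right _ _)

noncomputable def NN (n : ℕ) : (EuclideanSpace ℝ (Fin n) × EuclideanSpace ℝ (Fin n)) →L[ℝ]
    (EuclideanSpace ℝ (Fin n) × EuclideanSpace ℝ (Fin n)) :=
  (ContinuousLinearMap.fst ℝ _ _).prod (-(ContinuousLinearMap.snd ℝ _ _))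

lemma NN_apply (p : EuclideanSpace ℝ (Fin n) × EuclideanSpace ℝ (Fin n)) :
    NN n p = (p.1, -p.2) := rfl

lemma NN_NN (p : EuclideanSpace ℝ (Fin n) × EuclideanSpace ℝ (Fin n)) :
    NN n (NN n p) = p := by simp [NN_apply]

lemma frev_field (f : ℝ × EuclideanSpace ℝ (Fin n) → ℝ) (s₀ r : ℝ)
    (p : EuclideanSpace ℝ (Fin n) × EuclideanSpace ℝ (Fin n)) :
    -(NN n (ffField (fun q => f (2*s₀ - q.1, q.2)) r (NN n p)))
      = ffField f (2*s₀ - r) p := by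
  have hut : ∀ x, ut (fun q : ℝ × EuclideanSpace ℝ (Fin n) => f (2*s₀ - q.1, q.2)) r x
      = -(ut f (2*s₀ - r) x) := by
    intro x
    unfold ut
    exact deriv_comp_const_sub (f := fun t => Real.log (f (t, x))) (a := 2*s₀) (x := r)
  have hgrad : ∀ x, gradu (fun q : ℝ × EuclideanSpace ℝ (Fin n) => f (2*s₀ - q.1, q.2)) r x
      = gradu f (2*s₀ - r) x := fun x => rfl
  unfold ffField
  rw [NN_apply, NN_apply]
  simp only [Prod.fst, Prod.snd]
  apply Prod.ext
  · simp [NN_apply]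
  · show -(-( -((2 * (ut _ r p.1 + ⟪gradu _ r p.1, -p.2⟫_ℝ)) • (-p.2))
        + (‖-p.2‖ ^ 2) • gradu _ r p.1)) = _
    rw [hut p.1, hgrad p.1, inner_neg_right, norm_neg]
    module


lemma half_sol {n : ℕ} (f : ℝ × EuclideanSpace ℝ (Fin n) → ℝ)
    (hf : ContDiff ℝ (⊤ : ℕ∞) f) (hfpos : ∀ p, 0 < f p)
    (hper : ∀ (t : ℝ) (x k : EuclideanSpace ℝ (Fin n)),
      (∀ i, ∃ m : ℤ, k i = (m : ℝ)) → f (t, x + k) = f (t, x))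
    (s₀ : ℝ) (p₀ : EuclideanSpace ℝ (Fin n) × EuclideanSpace ℝ (Fin n)) :
    ∃ y : ℝ → EuclideanSpace ℝ (Fin n) × EuclideanSpace ℝ (Fin n), y s₀ = p₀ ∧
      ∀ s ∈ Ici s₀, HasDerivWithinAt y (ffField f s (y s)) (Ici s₀) s := by
  apply ode_global_fwd (ffField_contDiff hf hfpos) s₀ p₀
  intro b hb
  obtain ⟨M, hM⟩ := apriori_bound hf hfpos hper s₀ b hb p₀.1 p₀.2
  exact ⟨M, fun c hc y hy0 hy => hM c hc y (by rw [hy0]) hy⟩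

theorem freefall_global {n : ℕ} (f : ℝ × EuclideanSpace ℝ (Fin n) → ℝ)
    (hf : ContDiff ℝ (⊤ : ℕ∞) f) (hfpos : ∀ p, 0 < f p)
    (hper : ∀ (t : ℝ) (x k : EuclideanSpace ℝ (Fin n)),
      (∀ i, ∃ m : ℤ, k i = (m : ℝ)) → f (t, x + k) = f (t, x)) :
    ∀ (s₀ : ℝ) (x₀ v₀ : EuclideanSpace ℝ (Fin n)),
      ∃ w : ℝ → EuclideanSpace ℝ (Fin n) × EuclideanSpace ℝ (Fin n),
        (∀ s, HasDerivAt w (ffField f s (w s)) s) ∧ w s₀ = (x₀, v₀) := by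
  intro s₀ x₀ v₀
  obtain ⟨y, hy0, hy⟩ := half_sol f hf hfpos hper s₀ (x₀, v₀)
  -- backward: reversed data
  set fh : ℝ × EuclideanSpace ℝ (Fin n) → ℝ := fun q => f (2*s₀ - q.1, q.2) with hfh
  have hfh1 : ContDiff ℝ (⊤ : ℕ∞) fh :=
    hf.comp ((contDiff_const.sub contDiff_fst).prodMk contDiff_snd)
  have hfh2 : ∀ p, 0 < fh p := fun p => hfpos _
  have hfh3 : ∀ (t : ℝ) (x k : EuclideanSpace ℝ (Fin n)),
      (∀ i, ∃ m : ℤ, k i = (m : ℝ)) → fh (t, x + k) = fh (t, x) :=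
    fun t x k hk => hper _ x k hk
  obtain ⟨yr, hyr0, hyr⟩ := half_sol fh hfh1 hfh2 hfh3 s₀ (x₀, -v₀)
  set z : ℝ → EuclideanSpace ℝ (Fin n) × EuclideanSpace ℝ (Fin n) :=
    fun s => NN n (yr (2*s₀ - s)) with hz
  have hz0 : z s₀ = (x₀, v₀) := by
    rw [hz]
    simp only []
    rw [show 2*s₀ - s₀ = s₀ by ring, hyr0, NN_apply]
    simp
  have hzd : ∀ s ∈ Iic s₀, HasDerivWithinAt z (ffField f s (z s)) (Iic s₀) s := by
    intro s hss
    have hρ : HasDerivWithinAt (fun s : ℝ => 2*s₀ - s) (-1) (Iic s₀) s :=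
      ((hasDerivAt_id s).const_sub (2*s₀)).hasDerivWithinAt
    have hmaps : MapsTo (fun s : ℝ => 2*s₀ - s) (Iic s₀) (Ici s₀) := by
      intro x hx
      simp only [mem_Ici]
      simp only [mem_Iic] at hx
      linarith
    have hcomp := (hyr (2*s₀ - s) (by simp only [mem_Ici]; simp only [mem_Iic] at hss; linarith)).scomp s
      hρ hmaps
    have hNcomp := (NN n).hasFDerivAt.comp_hasDerivWithinAt s hcomp
    have heq : yr (2*s₀ - s) = NN n (z s) := by rw [hz]; simp only []; rw [NN_NN]
    rw [heq] at hNcomp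
    have hval : NN n ((-1 : ℝ) • ffField fh (2*s₀ - s) (NN n (z s)))
        = ffField f s (z s) := by
      rw [map_smul, neg_one_smul]
      have := frev_field f s₀ (2*s₀ - s) (z s)
      rw [show 2*s₀ - (2*s₀ - s) = s by ring] at this
      exact this
    rw [hval] at hNcomp
    exact hNcomp
  -- glue
  set w : ℝ → EuclideanSpace ℝ (Fin n) × EuclideanSpace ℝ (Fin n) :=
    fun s => if s ≤ s₀ then z s else y s with hwdef
  have hweqz : ∀ x ≤ s₀, w x = z x := fun x hx => if_pos hx
  have hweqy : ∀ x ∈ Ici s₀, w x = y x := by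
    intro x hx
    by_cases h : x ≤ s₀
    · have : x = s₀ := le_antisymm h hx
      subst this
      rw [hweqz x le_rfl, hz0, hy0]
    · exact if_neg h
  refine ⟨w, ?_, by rw [hweqz s₀ le_rfl, hz0]⟩
  intro s
  rcases lt_trichotomy s s₀ with h | h | h
  · have h1 := (hzd s (le_of_lt h)).hasDerivAt (Iic_mem_nhds h)
    have h2 : w =ᶠ[𝓝 s] z := by
      filter_upwards [Iio_mem_nhds h] with x hx
      exact hweqz x (le_of_lt hx)
    have h3 := h1.congr_of_eventuallyEq h2
    rwa [← hweqz s (le_of_lt h)] at h3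
  · subst h
    have hleft : HasDerivWithinAt w (ffField f s (w s)) (Iic s) s := by
      have := (hzd s (mem_Iic.mpr le_rfl)).congr (fun x hx => hweqz x hx) (hweqz s le_rfl)
      rwa [← hweqz s le_rfl] at this
    have hright : HasDerivWithinAt w (ffField f s (w s)) (Ici s) s := by
      have h4 := (hy s self_mem_Ici).congr (fun x hx => hweqy x hx) (hweqy s self_mem_Ici)
      rwa [← hweqy s self_mem_Ici] at h4
    have := hleft.union hright
    rw [Iic_union_Ici] at this
    exact this.hasDerivAt univ_mem
  · have h1 := (hy s (le_of_lt h)).hasDerivAt (Ici_mem_nhds h)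
    have h2 : w =ᶠ[𝓝 s] y := by
      filter_upwards [Ioi_mem_nhds h] with x hx
      exact hweqy x (mem_Ici.mpr (le_of_lt hx))
    have h3 := h1.congr_of_eventuallyEq h2
    rwa [← hweqy s (le_of_lt h)] at h3

/-- if `f` is `ℤⁿ`-periodic in the space variable, then the free-falling
trajectories for `f` are complete. -/
theorem stmt7 {n : ℕ} (f : ℝ × EuclideanSpace ℝ (Fin n) → ℝ)
    (hf : ContDiff ℝ (⊤ : ℕ∞) f) (hfpos : ∀ p, 0 < f p)
    (hper : ∀ (t : ℝ) (x k : EuclideanSpace ℝ (Fin n)),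
      (∀ i, ∃ m : ℤ, k i = (m : ℝ)) → f (t, x + k) = f (t, x)) :
    ∀ (s₀ : ℝ) (x₀ v₀ : EuclideanSpace ℝ (Fin n)),
      ∃ σ σ' : ℝ → EuclideanSpace ℝ (Fin n),
        IsFreeFall f σ σ' Set.univ ∧ σ s₀ = x₀ ∧ σ' s₀ = v₀ := by
  intro s₀ x₀ v₀
  obtain ⟨w, hw, hw0⟩ := freefall_global f hf hfpos hper s₀ x₀ v₀
  refine ⟨fun s => (w s).1, fun s => (w s).2, ⟨?_, ?_⟩,
    by show (w s₀).1 = x₀; rw [hw0], by show (w s₀).2 = v₀; rw [hw0]⟩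
  · intro s _
    exact (ContinuousLinearMap.fst ℝ _ _).hasFDerivAt.comp_hasDerivAt s (hw s)
  · intro s _
    exact (ContinuousLinearMap.snd ℝ _ _).hasFDerivAt.comp_hasDerivAt s (hw s)
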